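/- arXiv:2411.17050 — 4 statements merged into one kernel-verified Lean document; each statement's English description precedes it below -/
import Mathlib

section
/- Let {(u_i,v_i)}_{i=1}^n and {(u_i',v_i')}_{i=1}^n be two symplectic bases of F_2^{2n}. Then the matrix F = I + Σ_{i=1}^n Ω( v_i^T (u_i + u_i') + u_i^T (v_i + v_i') ) satisfies u_i F = u_i' and v_i F = v_i' for all i = 1,…,n. -/
open Matrix

/-- The standard symplectic Gram matrix Ω = [[0, I],[I, 0]] over F₂. -/
def OmegaF2 (n : ℕ) : Matrix (Fin n ⊕ Fin n) (Fin n ⊕ Fin n) (ZMod 2) :=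
  Matrix.fromBlocks 0 1 1 0

/-- The symplectic form (u,v)_s = u Ω vᵀ over F₂. -/
def sformF2 {n : ℕ} (u v : (Fin n ⊕ Fin n) → ZMod 2) : ZMod 2 :=
  u ⬝ᵥ (OmegaF2 n).mulVec v

/-- A family {(u_i, v_i)}_{i=1}^n is a symplectic basis of F₂^{2n}. -/
def IsSymplecticBasis {n : ℕ} (u v : Fin n → ((Fin n ⊕ Fin n) → ZMod 2)) : Prop :=
  (∀ i j, sformF2 (u i) (v j) = if i = j then 1 else 0) ∧
  (∀ i j, sformF2 (u i) (u j) = 0) ∧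
  (∀ i j, sformF2 (v i) (v j) = 0)

lemma OmegaF2_symm {n : ℕ} : (OmegaF2 n)ᵀ = OmegaF2 n := by
  simp [OmegaF2, Matrix.fromBlocks_transpose]

lemma key {n : ℕ} (x a b : (Fin n ⊕ Fin n) → ZMod 2) :
    Matrix.vecMul x (OmegaF2 n * Matrix.vecMulVec a b) = sformF2 x a • b := by
  ext j
  simp only [vecMul, dotProduct, Matrix.mul_apply, vecMulVec_apply, sformF2, mulVec,
    Pi.smul_apply, smul_eq_mul, Finset.sum_mul, Finset.mul_sum]
  apply Finset.sum_congr rfl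
  intro k _
  apply Finset.sum_congr rfl
  intro l _
  ring

lemma sformF2_comm {n : ℕ} (x y : (Fin n ⊕ Fin n) → ZMod 2) :
    sformF2 x y = sformF2 y x := by
  unfold sformF2
  rw [Matrix.dotProduct_mulVec, ← Matrix.vecMul_transpose, OmegaF2_symm,
    ← Matrix.mulVec_transpose, OmegaF2_symm, dotProduct_comm]

lemma vecMul_sum' {m k ι : Type*} [Fintype m] [Fintype ι] (x : m → ZMod 2)
    (A : ι → Matrix m k (ZMod 2)) :
    Matrix.vecMul x (∑ i, A i) = ∑ i, Matrix.vecMul x (A i) := by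
  ext j
  simp [Matrix.vecMul, dotProduct, Matrix.sum_apply, Finset.mul_sum]
  rw [Finset.sum_comm]

/-- The matrix F = I + Σ_i Ω(v_iᵀ(u_i+u_i') + u_iᵀ(v_i+v_i')) maps u_i ↦ u_i' and
v_i ↦ v_i' for two symplectic bases. -/
theorem symplectic_basis_mapping {n : ℕ}
    (u v u' v' : Fin n → ((Fin n ⊕ Fin n) → ZMod 2))
    (hB : IsSymplecticBasis u v) (hB' : IsSymplecticBasis u' v') :
    let F := (1 : Matrix (Fin n ⊕ Fin n) (Fin n ⊕ Fin n) (ZMod 2)) +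
      OmegaF2 n * (∑ i, (Matrix.vecMulVec (v i) (u i + u' i) +
        Matrix.vecMulVec (u i) (v i + v' i)))
    ∀ i, Matrix.vecMul (u i) F = u' i ∧ Matrix.vecMul (v i) F = v' i := by
  obtain ⟨h1, h2, h3⟩ := hB
  intro F i
  have htwo : ∀ a : ZMod 2, a + a = 0 := by decide
  have hF : F = 1 + ∑ j, (OmegaF2 n * Matrix.vecMulVec (v j) (u j + u' j) +
      OmegaF2 n * Matrix.vecMulVec (u j) (v j + v' j)) := by
    simp [F, Finset.mul_sum, mul_add]
  constructor <;> rw [hF]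
  · simp only [vecMul_add, vecMul_one, vecMul_sum', key, h1, h2,
      ite_smul, one_smul, zero_smul, Finset.sum_add_distrib,
      Finset.sum_ite_eq, Finset.mem_univ, if_true, Finset.sum_const_zero, add_zero]
    funext k
    simp only [Pi.add_apply]
    rw [← add_assoc, htwo, zero_add]
  · have h1' : ∀ j, sformF2 (v i) (u j) = if j = i then 1 else 0 := fun j => by
      rw [sformF2_comm]; exact h1 j i
    simp only [vecMul_add, vecMul_one, vecMul_sum', key, h1', h3,
      ite_smul, one_smul, zero_smul, Finset.sum_add_distrib,
      Finset.sum_ite_eq', Finset.mem_univ, if_true, Finset.sum_const_zero, zero_add]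
    funext k
    simp only [Pi.add_apply]
    rw [← add_assoc, htwo, zero_add]
end

section
/- Let v ∈ F_2^n, fix x ∈ supp(v), and set v̄ = v + e_x. Define F_1 = [[I + v̄^T e_x, 0],[0, I + e_x^T v̄]] and F_2 = [[I, e_x^T e_x],[0, I]] (2×2 block form, n×n blocks, over F_2). Then F_1 F_2 F_1 = [[I, v^T v],[0, I]]. -/
open Matrix

lemma vecMulVec_mul_vecMulVec' {n : ℕ} (a b c d : Fin n → ZMod 2) :
    vecMulVec a b * vecMulVec c d = (b ⬝ᵥ c) • vecMulVec a d := by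
  ext i j
  simp [mul_apply, vecMulVec_apply, dotProduct, Finset.mul_sum, Finset.sum_mul]
  ring_nf
  rw [Finset.sum_congr rfl]
  intro k _
  ring

/-- Decomposition identity for the logical Phase gate: with v̄ = v + e_x, x ∈ supp(v),
F₁ = [[I + v̄ᵀe_x, 0],[0, I + e_xᵀv̄]], F₂ = [[I, e_xᵀe_x],[0, I]], we have
F₁ F₂ F₁ = [[I, vᵀv],[0, I]]. -/
theorem phase_gate_decomposition {n : ℕ} (v : Fin n → ZMod 2) (x : Fin n)
    (hx : v x = 1) :
    let ex : Fin n → ZMod 2 := Pi.single x 1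
    let vbar := v + ex
    let F1 : Matrix (Fin n ⊕ Fin n) (Fin n ⊕ Fin n) (ZMod 2) :=
      Matrix.fromBlocks (1 + Matrix.vecMulVec vbar ex) 0 0
        (1 + Matrix.vecMulVec ex vbar)
    let F2 : Matrix (Fin n ⊕ Fin n) (Fin n ⊕ Fin n) (ZMod 2) :=
      Matrix.fromBlocks 1 (Matrix.vecMulVec ex ex) 0 1
    F1 * F2 * F1 = Matrix.fromBlocks 1 (Matrix.vecMulVec v v) 0 1 := by
  intro ex vbar F1 F2
  have hxv : ex ⬝ᵥ vbar = 0 := by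
    simp [vbar, dotProduct, ex, Pi.single_apply, Finset.sum_ite_eq', hx]
    decide
  have hvx : vbar ⬝ᵥ ex = 0 := by
    simp [vbar, dotProduct, ex, Pi.single_apply, Finset.sum_ite_eq', hx]
    decide
  have hxx : ex ⬝ᵥ ex = 1 := by
    simp [dotProduct, ex, Pi.single_apply, Finset.sum_ite_eq']
  have hA : (1 + vecMulVec vbar ex) * (1 + vecMulVec vbar ex) = 1 := by
    rw [mul_add, mul_one, add_mul, one_mul, vecMulVec_mul_vecMulVec', hxv]
    have : (vecMulVec vbar ex : Matrix (Fin n) (Fin n) (ZMod 2)) +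
        vecMulVec vbar ex = 0 := by
      ext i j
      simp [Matrix.add_apply, CharTwo.add_self_eq_zero]
    rw [zero_smul, add_zero, add_assoc, this, add_zero]
  have hD : (1 + vecMulVec ex vbar) * (1 + vecMulVec ex vbar) = 1 := by
    rw [mul_add, mul_one, add_mul, one_mul, vecMulVec_mul_vecMulVec', hvx]
    have : (vecMulVec ex vbar : Matrix (Fin n) (Fin n) (ZMod 2)) +
        vecMulVec ex vbar = 0 := by
      ext i j
      simp [Matrix.add_apply, CharTwo.add_self_eq_zero]
    rw [zero_smul, add_zero, add_assoc, this, add_zero]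
  have hB : (1 + vecMulVec vbar ex) * vecMulVec ex ex * (1 + vecMulVec ex vbar)
      = vecMulVec v v := by
    simp only [mul_add, add_mul, mul_one, one_mul, vecMulVec_mul_vecMulVec', hxx,
      one_smul, hxv, hvx, zero_smul, add_zero, zero_add]
    ext i j
    simp only [Matrix.add_apply, vecMulVec_apply, vbar, Pi.add_apply]
    have h2 : (2 : ZMod 2) = 0 := by decide
    linear_combination (2 * ex i * ex j + v i * ex j + ex i * v j) * h2
  simp only [F1, F2, Matrix.fromBlocks_multiply, Matrix.mul_zero, Matrix.zero_mul,
    Matrix.mul_one, Matrix.one_mul, add_zero, zero_add]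
  rw [hA, hD, hB]
end

section
/- Let u, v ∈ F_2^n with supp(u) ∩ supp(v) = {ρ}, and set ū = u + e_ρ, v̄ = v + e_ρ (so ū e_ρ^T = v̄ e_ρ^T = ū v̄^T = 0). Define F_1 = [[I, e_ρ^T v̄ + v̄^T e_ρ],[0, I]], F_2 = [[I, 0],[ū^T e_ρ + e_ρ^T ū, I]], F_3 = [[I + e_ρ^T ū, 0],[0, I + ū^T e_ρ]], F_4 = [[I + v̄^T e_ρ, 0],[0, I + e_ρ^T v̄]], F_5 = [[I + e_ρ^T e_ρ, e_ρ^T e_ρ],[e_ρ^T e_ρ, I + e_ρ^T e_ρ]]. Then F_5 F_4 F_3 F_2 F_1 = [[I + v^T u, v^T v],[u^T u, I + u^T v]]. -/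
open Matrix

section aux
variable {n : ℕ} {R : Type*} [CommRing R]

lemma vmv_mul (a b c d : Fin n → R) :
    vecMulVec a b * vecMulVec c d = (b ⬝ᵥ c) • vecMulVec a d := by
  ext i j
  simp [Matrix.mul_apply, vecMulVec_apply, dotProduct, Finset.mul_sum, Finset.sum_mul]
  congr 1; ext k; ring

lemma vmv_add_left (a b c : Fin n → R) :
    vecMulVec (a + b) c = vecMulVec a c + vecMulVec b c := by
  ext i j; simp [vecMulVec_apply]; ring

lemma vmv_add_right (a b c : Fin n → R) :
    vecMulVec a (b + c) = vecMulVec a b + vecMulVec a c := by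
  ext i j; simp [vecMulVec_apply]; ring

end aux

/-- Decomposition identity for the logical Hadamard gate (Appendix C.1): with
supp(u) ∩ supp(v) = {ρ}, ū = u + e_ρ, v̄ = v + e_ρ, the product F₅F₄F₃F₂F₁ of the
five elementary symplectic matrices equals [[I + vᵀu, vᵀv],[uᵀu, I + uᵀv]]. -/
theorem hadamard_gate_decomposition {n : ℕ} (u v : Fin n → ZMod 2) (ρ : Fin n)
    (hsupp : ∀ j : Fin n, (u j = 1 ∧ v j = 1) ↔ j = ρ) :
    let e : Fin n → ZMod 2 := Pi.single ρ 1
    let ubar := u + e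
    let vbar := v + e
    let F1 : Matrix (Fin n ⊕ Fin n) (Fin n ⊕ Fin n) (ZMod 2) :=
      Matrix.fromBlocks 1 (Matrix.vecMulVec e vbar + Matrix.vecMulVec vbar e) 0 1
    let F2 : Matrix (Fin n ⊕ Fin n) (Fin n ⊕ Fin n) (ZMod 2) :=
      Matrix.fromBlocks 1 0 (Matrix.vecMulVec ubar e + Matrix.vecMulVec e ubar) 1
    let F3 : Matrix (Fin n ⊕ Fin n) (Fin n ⊕ Fin n) (ZMod 2) :=
      Matrix.fromBlocks (1 + Matrix.vecMulVec e ubar) 0 0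
        (1 + Matrix.vecMulVec ubar e)
    let F4 : Matrix (Fin n ⊕ Fin n) (Fin n ⊕ Fin n) (ZMod 2) :=
      Matrix.fromBlocks (1 + Matrix.vecMulVec vbar e) 0 0
        (1 + Matrix.vecMulVec e vbar)
    let F5 : Matrix (Fin n ⊕ Fin n) (Fin n ⊕ Fin n) (ZMod 2) :=
      Matrix.fromBlocks (1 + Matrix.vecMulVec e e) (Matrix.vecMulVec e e)
        (Matrix.vecMulVec e e) (1 + Matrix.vecMulVec e e)
    F5 * F4 * F3 * F2 * F1 =
      Matrix.fromBlocks (1 + Matrix.vecMulVec v u) (Matrix.vecMulVec v v)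
        (Matrix.vecMulVec u u) (1 + Matrix.vecMulVec u v) := by
  intro e ubar vbar F1 F2 F3 F4 F5
  -- scalar facts
  have huρ : u ρ = 1 := ((hsupp ρ).mpr rfl).1
  have hvρ : v ρ = 1 := ((hsupp ρ).mpr rfl).2
  have hubρ : ubar ρ = 0 := by
    simp [ubar, e, huρ]; decide
  have hvbρ : vbar ρ = 0 := by
    simp [vbar, e, hvρ]; decide
  have hee : e ⬝ᵥ e = 1 := by
    simp [dotProduct, e, Pi.single_apply]
  have hube : ubar ⬝ᵥ e = 0 := by
    simp [dotProduct, e, Pi.single_apply, Finset.sum_ite_eq', hubρ]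
  have heub : e ⬝ᵥ ubar = 0 := by
    simp [dotProduct, e, Pi.single_apply, Finset.sum_ite_eq, hubρ]
  have hvbe : vbar ⬝ᵥ e = 0 := by
    simp [dotProduct, e, Pi.single_apply, Finset.sum_ite_eq', hvbρ]
  have hevb : e ⬝ᵥ vbar = 0 := by
    simp [dotProduct, e, Pi.single_apply, Finset.sum_ite_eq, hvbρ]
  have huv2 : ∀ j, u j * v j = if j = ρ then 1 else 0 := by
    intro j
    rcases eq_or_ne j ρ with h | h
    · simp [h, huρ, hvρ]
    · simp only [h, if_false]
      have hne : ¬ (u j = 1 ∧ v j = 1) := fun hc => h ((hsupp j).mp hc)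
      have h01 : ∀ x : ZMod 2, x = 0 ∨ x = 1 := by decide
      rcases h01 (u j) with hx | hx <;> rcases h01 (v j) with hy | hy <;>
        simp_all
  have hubvb : ubar ⬝ᵥ vbar = 0 := by
    have : ∀ j, ubar j * vbar j = 0 := by
      intro j
      rcases eq_or_ne j ρ with h | h
      · simp [h, hubρ]
      · simp [ubar, vbar, e, Pi.single_apply, h]
        have := huv2 j
        simp [h] at this
        exact this
    simp [dotProduct, this]
  have hvbub : vbar ⬝ᵥ ubar = 0 := by
    rw [dotProduct_comm]; exact hubvb
  -- vector rewrites
  have h2 : (2 : ZMod 2) = 0 := by decide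
  have hu : u = ubar + e := by
    ext j; simp [ubar]; ring_nf; simp [h2]
  have hv : v = vbar + e := by
    ext j; simp [vbar]; ring_nf; simp [h2]
  show F5 * F4 * F3 * F2 * F1 = _
  simp only [F1, F2, F3, F4, F5, Matrix.fromBlocks_multiply]
  rw [hu, hv]
  have h3 : (3 : Matrix (Fin n) (Fin n) (ZMod 2)) = 1 := by
    have : ((3:ℕ) : Matrix (Fin n) (Fin n) (ZMod 2)) = ((1:ℕ) : Matrix (Fin n) (Fin n) (ZMod 2)) := by
      rw [← Matrix.diagonal_natCast, ← Matrix.diagonal_natCast]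
      congr 1
    simpa using this
  rw [Matrix.fromBlocks_inj]
  refine ⟨?_, ?_, ?_, ?_⟩ <;>
    simp only [vmv_add_left, vmv_add_right, Matrix.mul_add, Matrix.add_mul,
      Matrix.mul_one, Matrix.one_mul, Matrix.mul_zero, Matrix.zero_mul,
      vmv_mul, hee, hube, heub, hvbe, hevb, hubvb, hvbub, one_smul, zero_smul,
      add_zero, zero_add] <;> abel_nf <;> simp [h3]
end

section
/- Let v ∈ F_2^{ñ}, u ∈ F_2^{m̃}, fix x ∈ supp(v), set v̄ = v + e_x. Define (in 4×4 block form with blocks of sizes ñ and m̃) F_1 = diag-type matrix with blocks [[I+v̄^T e_x, 0, 0, 0],[0, I, 0, 0],[0, 0, I+e_x^T v̄, 0],[0, 0, 0, I]] and F_2 = [[I, e_x^T u, 0, 0],[0, I, 0, 0],[0, 0, I, 0],[0, 0, u^T e_x, I]]. Then F_1 F_2 F_1 = [[I, v^T u, 0, 0],[0, I, 0, 0],[0, 0, I, 0],[0, 0, u^T v, I]]. -/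
open Matrix

private lemma vmv_mul_vmv {n m q : Type*} [Fintype m] (a : n → ZMod 2) (b c : m → ZMod 2)
    (d : q → ZMod 2) : vecMulVec a b * vecMulVec c d = (b ⬝ᵥ c) • vecMulVec a d := by
  ext i j
  simp [mul_apply, vecMulVec_apply, dotProduct, Finset.sum_mul, Finset.mul_sum, smul_eq_mul]
  exact Finset.sum_congr rfl fun k _ => by ring

private lemma add_vmv {n q : Type*} (a b : n → ZMod 2) (d : q → ZMod 2) :
    vecMulVec (a + b) d = vecMulVec a d + vecMulVec b d := by
  ext i j; simp [vecMulVec_apply, add_mul]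

private lemma vmv_add {n q : Type*} (a : n → ZMod 2) (b c : q → ZMod 2) :
    vecMulVec a (b + c) = vecMulVec a b + vecMulVec a c := by
  ext i j; simp [vecMulVec_apply, mul_add]

/-- Decomposition identity for the logical CNOT between logical qubits in different
sectors of an HGP code (Appendix D): F₁ F₂ F₁ = [[I, vᵀu, 0, 0],[0, I, 0, 0],
[0, 0, I, 0],[0, 0, uᵀv, I]] with v̄ = v + e_x, x ∈ supp(v). -/
theorem cnot_gate_decomposition_different_sectors {nt mt : ℕ}
    (v : Fin nt → ZMod 2) (u : Fin mt → ZMod 2) (x : Fin nt) (hx : v x = 1) :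
    let ex : Fin nt → ZMod 2 := Pi.single x 1
    let vbar := v + ex
    let F1 : Matrix ((Fin nt ⊕ Fin mt) ⊕ (Fin nt ⊕ Fin mt))
        ((Fin nt ⊕ Fin mt) ⊕ (Fin nt ⊕ Fin mt)) (ZMod 2) :=
      Matrix.fromBlocks
        (Matrix.fromBlocks (1 + Matrix.vecMulVec vbar ex) 0 0 1) 0 0
        (Matrix.fromBlocks (1 + Matrix.vecMulVec ex vbar) 0 0 1)
    let F2 : Matrix ((Fin nt ⊕ Fin mt) ⊕ (Fin nt ⊕ Fin mt))
        ((Fin nt ⊕ Fin mt) ⊕ (Fin nt ⊕ Fin mt)) (ZMod 2) :=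
      Matrix.fromBlocks
        (Matrix.fromBlocks 1 (Matrix.vecMulVec ex u) 0 1) 0 0
        (Matrix.fromBlocks 1 0 (Matrix.vecMulVec u ex) 1)
    F1 * F2 * F1 =
      Matrix.fromBlocks
        (Matrix.fromBlocks 1 (Matrix.vecMulVec v u) 0 1) 0 0
        (Matrix.fromBlocks 1 0 (Matrix.vecMulVec u v) 1) := by
  intro ex vbar F1 F2
  have hev : ex ⬝ᵥ vbar = 0 := by
    simp [dotProduct, vbar, ex, Pi.single_apply, Finset.sum_ite_eq', hx]; decide
  have hve : vbar ⬝ᵥ ex = 0 := by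
    simp [dotProduct, vbar, ex, Pi.single_apply, Finset.sum_ite_eq, hx]; decide
  have hee : ex ⬝ᵥ ex = 1 := by
    simp [dotProduct, ex, Pi.single_apply, Finset.sum_ite_eq']
  have hvex : vbar + ex = v := by
    ext i; simp only [vbar, Pi.add_apply, add_assoc, CharTwo.add_self_eq_zero, add_zero]
  have hvex' : ex + vbar = v := by rw [add_comm]; exact hvex
  have hWW : ∀ (W : Matrix (Fin nt) (Fin nt) (ZMod 2)), W + W = 0 := fun W => by
    ext i j; exact CharTwo.add_self_eq_zero _
  set A : Matrix (Fin nt) (Fin nt) (ZMod 2) := 1 + vecMulVec vbar ex with hA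
  set B : Matrix (Fin nt) (Fin nt) (ZMod 2) := 1 + vecMulVec ex vbar with hB
  have hA2 : A * A = 1 := by
    rw [hA, add_mul, mul_add, mul_add, one_mul, mul_one, vmv_mul_vmv, hev, zero_smul,
      add_zero, one_mul, add_assoc, hWW, add_zero]
  have hB2 : B * B = 1 := by
    rw [hB, add_mul, mul_add, mul_add, one_mul, mul_one, vmv_mul_vmv, hve, zero_smul,
      add_zero, one_mul, add_assoc, hWW, add_zero]
  have hAeu : A * vecMulVec ex u = vecMulVec v u := by
    rw [hA, Matrix.add_mul, Matrix.one_mul, vmv_mul_vmv, hee, one_smul, ← add_vmv, hvex']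
  have hueB : vecMulVec u ex * B = vecMulVec u v := by
    rw [hB, Matrix.mul_add, Matrix.mul_one, vmv_mul_vmv, hee, one_smul, ← vmv_add, hvex']
  show F1 * F2 * F1 = _
  simp only [F1, F2, Matrix.fromBlocks_multiply, Matrix.mul_zero, Matrix.zero_mul,
    Matrix.mul_one, Matrix.one_mul, add_zero, zero_add, hA2, hB2, hAeu, hueB]
  rw [← hA, ← hB, hA2, hB2, hAeu, hueB]
end
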